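/- In the polarized pushback 𝐃 = (𝐊 + 𝐋̄) +ₑ 𝐊̃ of l : 𝐊 → 𝐋 along a matching m : 𝐋 → 𝐆 with all linking edges of m polarized, for every pair of nodes n_D ∈ D_N⁺ and p_D ∈ D_N⁻ there is a bijection K̃(n_D, p_D) ≅ L̃⋆(l₁(n_D), l₁(p_D)), and K̃(n_D, p_D) is empty whenever n_D ∉ D_N⁺ or p_D ∉ D_N⁻. -/

import Mathlib

universe u

structure Graph' : Type (u + 1) where
  N : Type u
  E : Type u
  src : E → N
  tgt : E → N

@[ext]
structure GraphHom (X Y : Graph'.{u}) where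
  fN : X.N → Y.N
  fE : X.E → Y.E
  hsrc : ∀ e, Y.src (fE e) = fN (X.src e)
  htgt : ∀ e, Y.tgt (fE e) = fN (X.tgt e)

def GraphHom.id (X : Graph'.{u}) : GraphHom X X :=
  ⟨_root_.id, _root_.id, fun _ => rfl, fun _ => rfl⟩

/-- `g.comp f` is the composite `g ∘ f`. -/
def GraphHom.comp {X Y Z : Graph'.{u}} (g : GraphHom Y Z) (f : GraphHom X Y) :
    GraphHom X Z :=
  ⟨g.fN ∘ f.fN, g.fE ∘ f.fE,
    fun e => by simp [Function.comp, g.hsrc, f.hsrc],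
    fun e => by simp [Function.comp, g.htgt, f.htgt]⟩

/-- A polarization of a graph: distinguished node subsets `N⁺`, `N⁻` and a
distinguished edge subset `E⋆` such that every edge in `E⋆` has its source
in `N⁺` and its target in `N⁻`. -/
structure Polarization (X : Graph'.{u}) where
  Np : Set X.N
  Nm : Set X.N
  Es : Set X.E
  hs : ∀ e ∈ Es, X.src e ∈ Np
  ht : ∀ e ∈ Es, X.tgt e ∈ Nm

/-- A polarized graph: a graph together with a polarization. -/
structure PGraph : Type (u + 1) where
  toGraph : Graph'.{u}
  pol : Polarization toGraph

/-- A morphism of polarized graphs: a graph morphism preserving the three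
distinguished subsets. -/
structure PGraphHom (X Y : PGraph.{u}) where
  toHom : GraphHom X.toGraph Y.toGraph
  hNp : ∀ n ∈ X.pol.Np, toHom.fN n ∈ Y.pol.Np
  hNm : ∀ n ∈ X.pol.Nm, toHom.fN n ∈ Y.pol.Nm
  hEs : ∀ e ∈ X.pol.Es, toHom.fE e ∈ Y.pol.Es

def PGraphHom.id (X : PGraph.{u}) : PGraphHom X X :=
  ⟨GraphHom.id X.toGraph, fun _ h => h, fun _ h => h, fun _ h => h⟩

/-- `g.comp f` is the composite `g ∘ f`. -/
def PGraphHom.comp {X Y Z : PGraph.{u}} (g : PGraphHom Y Z) (f : PGraphHom X Y) :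
    PGraphHom X Z :=
  ⟨g.toHom.comp f.toHom,
    fun n h => g.hNp _ (f.hNp n h),
    fun n h => g.hNm _ (f.hNm n h),
    fun e h => g.hEs _ (f.hEs e h)⟩

section
variable (X Xbar : Graph'.{u}) (Xt : Type u) (xs xt : Xt → X.N ⊕ Xbar.N)

/-- The graph `(X + Xbar) +ₑ Xt` built from decomposition data. -/
def sumGraph : Graph'.{u} where
  N := X.N ⊕ Xbar.N
  E := X.E ⊕ Xbar.E ⊕ Xt
  src := Sum.elim (Sum.inl ∘ X.src) (Sum.elim (Sum.inr ∘ Xbar.src) xs)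
  tgt := Sum.elim (Sum.inl ∘ X.tgt) (Sum.elim (Sum.inr ∘ Xbar.tgt) xt)

/-- The canonical inclusion (a monomorphism) `X → (X + Xbar) +ₑ Xt`. -/
def sumIncl : GraphHom X (sumGraph X Xbar Xt xs xt) :=
  ⟨Sum.inl, Sum.inl, fun _ => rfl, fun _ => rfl⟩

end

section
variable (K L Lbar : PGraph.{u}) (l : PGraphHom K L)
variable (Lt : Type u) (ls lt : Lt → L.toGraph.N ⊕ Lbar.toGraph.N)
variable (hls : ∀ e, Sum.elim (· ∈ L.pol.Np) (· ∈ Lbar.pol.Np) (ls e))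
variable (hlt : ∀ e, Sum.elim (· ∈ L.pol.Nm) (· ∈ Lbar.pol.Nm) (lt e))

/-- The polarized graph `G = (L + Lbar) +ₑ Lt`, where every linking edge is
polarized (`Lt⋆ = Lt`). -/
def polG : PGraph.{u} where
  toGraph := sumGraph L.toGraph Lbar.toGraph Lt ls lt
  pol :=
  { Np := fun n => Sum.elim (· ∈ L.pol.Np) (· ∈ Lbar.pol.Np) n
    Nm := fun n => Sum.elim (· ∈ L.pol.Nm) (· ∈ Lbar.pol.Nm) n
    Es := fun e =>
      Sum.elim (· ∈ L.pol.Es) (Sum.elim (· ∈ Lbar.pol.Es) (fun _ => True)) e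
    hs := by
      rintro (e | e | e) he
      · exact L.pol.hs e he
      · exact Lbar.pol.hs e he
      · exact hls e
    ht := by
      rintro (e | e | e) he
      · exact L.pol.ht e he
      · exact Lbar.pol.ht e he
      · exact hlt e }

/-- The matching `m : L → G` (the canonical inclusion). -/
def polm : PGraphHom L (polG L Lbar Lt ls lt hls hlt) where
  toHom := sumIncl L.toGraph Lbar.toGraph Lt ls lt
  hNp := fun _ h => h
  hNm := fun _ h => h
  hEs := fun _ h => h

/-- The linking edges of the polarized pushback: one (polarized) edge
`(e, n_D, p_D) : n_D → p_D` for each `n_D ∈ D⁺`, `p_D ∈ D⁻` and each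
(polarized) linking edge `e : l₁ n_D → l₁ p_D` in `Lt`. -/
def polKt : Type u :=
  {x : ((K.toGraph.N ⊕ Lbar.toGraph.N) × (K.toGraph.N ⊕ Lbar.toGraph.N)) × Lt //
    Sum.elim (· ∈ K.pol.Np) (· ∈ Lbar.pol.Np) x.1.1 ∧
    Sum.elim (· ∈ K.pol.Nm) (· ∈ Lbar.pol.Nm) x.1.2 ∧
    ls x.2 = Sum.map l.toHom.fN _root_.id x.1.1 ∧
    lt x.2 = Sum.map l.toHom.fN _root_.id x.1.2}

/-- The polarized pushback object `D = (K + Lbar) +ₑ Kt`. -/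
def polD : PGraph.{u} where
  toGraph :=
  { N := K.toGraph.N ⊕ Lbar.toGraph.N
    E := K.toGraph.E ⊕ Lbar.toGraph.E ⊕ polKt K L Lbar l Lt ls lt
    src := Sum.elim (Sum.inl ∘ K.toGraph.src)
      (Sum.elim (Sum.inr ∘ Lbar.toGraph.src) (fun x => x.1.1.1))
    tgt := Sum.elim (Sum.inl ∘ K.toGraph.tgt)
      (Sum.elim (Sum.inr ∘ Lbar.toGraph.tgt) (fun x => x.1.1.2)) }
  pol :=
  { Np := fun n => Sum.elim (· ∈ K.pol.Np) (· ∈ Lbar.pol.Np) n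
    Nm := fun n => Sum.elim (· ∈ K.pol.Nm) (· ∈ Lbar.pol.Nm) n
    Es := fun e =>
      Sum.elim (· ∈ K.pol.Es) (Sum.elim (· ∈ Lbar.pol.Es) (fun _ => True)) e
    hs := by
      rintro (e | e | e) he
      · exact K.pol.hs e he
      · exact Lbar.pol.hs e he
      · exact e.2.1
    ht := by
      rintro (e | e | e) he
      · exact K.pol.ht e he
      · exact Lbar.pol.ht e he
      · exact e.2.2.1 }

/-- The canonical inclusion `d : K → D` (a matching). -/
def pold : PGraphHom K (polD K L Lbar l Lt ls lt) where
  toHom := ⟨Sum.inl, Sum.inl, fun _ => rfl, fun _ => rfl⟩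
  hNp := fun _ h => h
  hNm := fun _ h => h
  hEs := fun _ h => h

/-- The morphism `l₁ = (l + id) +ₑ l̃ : D → G`, `l̃ (e, n_D, p_D) = e`. -/
def poll1 :
    PGraphHom (polD K L Lbar l Lt ls lt) (polG L Lbar Lt ls lt hls hlt) where
  toHom :=
  { fN := Sum.map l.toHom.fN _root_.id
    fE := Sum.map l.toHom.fE (Sum.map _root_.id (fun x => x.1.2))
    hsrc := by
      rintro (e | e | e) <;>
        simp [polD, polG, sumGraph, l.toHom.hsrc]
      exact e.2.2.2.1
    htgt := by
      rintro (e | e | e) <;>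
        simp [polD, polG, sumGraph, l.toHom.htgt]
      exact e.2.2.2.2 }
  hNp := by
    rintro (n | n) hn
    · exact l.hNp n hn
    · exact hn
  hNm := by
    rintro (n | n) hn
    · exact l.hNm n hn
    · exact hn
  hEs := by
    rintro (e | e | e) he
    · exact l.hEs e he
    · exact he
    · trivial

end

section
variable {K L Lbar : PGraph.{u}} {l : PGraphHom K L} {Lt : Type u}
  {ls lt : Lt → L.toGraph.N ⊕ Lbar.toGraph.N} {nD pD : K.toGraph.N ⊕ Lbar.toGraph.N}

def polKtFiberEquiv (hn : nD ∈ (polD K L Lbar l Lt ls lt).pol.Np)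
    (hp : pD ∈ (polD K L Lbar l Lt ls lt).pol.Nm) :
    {e : polKt K L Lbar l Lt ls lt // e.1.1.1 = nD ∧ e.1.1.2 = pD} ≃
      {e : Lt // ls e = Sum.map l.toHom.fN _root_.id nD ∧
                 lt e = Sum.map l.toHom.fN _root_.id pD} where
  toFun x := ⟨x.1.1.2, x.1.2.2.2.1.trans (congrArg _ x.2.1),
    x.1.2.2.2.2.trans (congrArg _ x.2.2)⟩
  invFun e := ⟨⟨((nD, pD), e.1), hn, hp, e.2⟩, rfl, rfl⟩
  left_inv := by rintro ⟨⟨⟨⟨_, _⟩, _⟩, _⟩, rfl, rfl⟩; rfl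
  right_inv _ := rfl

/-- Linking edges of `D` are polarized, so their endpoints lie in `D⁺` and `D⁻`. -/
theorem isEmpty_polKt_fiber
    (h : ¬(nD ∈ (polD K L Lbar l Lt ls lt).pol.Np ∧ pD ∈ (polD K L Lbar l Lt ls lt).pol.Nm)) :
    IsEmpty {e : polKt K L Lbar l Lt ls lt // e.1.1.1 = nD ∧ e.1.1.2 = pD} :=
  ⟨by rintro ⟨e, rfl, rfl⟩; exact h ⟨e.2.1, e.2.2.1⟩⟩

end

theorem polarized_pushback_linking_edges_general (K L Lbar : PGraph.{u})
    (l : PGraphHom K L) (Lt : Type u)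
    (ls lt : Lt → L.toGraph.N ⊕ Lbar.toGraph.N)
    (nD pD : (polD K L Lbar l Lt ls lt).toGraph.N) :
    (nD ∈ (polD K L Lbar l Lt ls lt).pol.Np →
     pD ∈ (polD K L Lbar l Lt ls lt).pol.Nm →
     Nonempty
       ({e : polKt K L Lbar l Lt ls lt // e.1.1.1 = nD ∧ e.1.1.2 = pD} ≃
        {e : Lt // ls e = Sum.map l.toHom.fN _root_.id nD ∧
                   lt e = Sum.map l.toHom.fN _root_.id pD})) ∧
    (¬(nD ∈ (polD K L Lbar l Lt ls lt).pol.Np ∧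
       pD ∈ (polD K L Lbar l Lt ls lt).pol.Nm) →
     IsEmpty
       {e : polKt K L Lbar l Lt ls lt // e.1.1.1 = nD ∧ e.1.1.2 = pD}) :=
  ⟨fun hn hp => ⟨polKtFiberEquiv hn hp⟩, isEmpty_polKt_fiber⟩

theorem polarized_pushback_linking_edges (K L Lbar : PGraph.{u})
    (l : PGraphHom K L) (Lt : Type u)
    (ls lt : Lt → L.toGraph.N ⊕ Lbar.toGraph.N)
    (hls : ∀ e, Sum.elim (· ∈ L.pol.Np) (· ∈ Lbar.pol.Np) (ls e))
    (hlt : ∀ e, Sum.elim (· ∈ L.pol.Nm) (· ∈ Lbar.pol.Nm) (lt e))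
    (nD pD : (polD K L Lbar l Lt ls lt).toGraph.N) :
    (nD ∈ (polD K L Lbar l Lt ls lt).pol.Np →
     pD ∈ (polD K L Lbar l Lt ls lt).pol.Nm →
     Nonempty
       ({e : polKt K L Lbar l Lt ls lt // e.1.1.1 = nD ∧ e.1.1.2 = pD} ≃
        {e : Lt // ls e = Sum.map l.toHom.fN _root_.id nD ∧
                   lt e = Sum.map l.toHom.fN _root_.id pD})) ∧
    (¬(nD ∈ (polD K L Lbar l Lt ls lt).pol.Np ∧
       pD ∈ (polD K L Lbar l Lt ls lt).pol.Nm) →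
     IsEmpty
       {e : polKt K L Lbar l Lt ls lt // e.1.1.1 = nD ∧ e.1.1.2 = pD}) :=
  polarized_pushback_linking_edges_general K L Lbar l Lt ls lt nD pD
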